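/- arXiv:math/0510441 — 6 statements merged into one kernel-verified Lean document; each statement's English description precedes it below -/
import Mathlib

section
/- Let G be a nilpotent group and φ : G → G a group endomorphism. Suppose that for every i ≥ 1 the endomorphism that φ induces on the abelian quotient γ_i(G)/γ_{i+1}(G) of the lower central series has the property that the map x ↦ φ̄(x)·x⁻¹ on γ_i(G)/γ_{i+1}(G) is bijective. Then the map G → G given by x ↦ φ(x⁻¹)·x is a bijection. -/
/-!
Write `L x = φ x⁻¹ * x` (this is `langMap φ`). Both halves of bijectivity are proved by climbing
the lower central series, which reaches `⊥` because `G` is nilpotent. If `L x = L y` then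
`x * y⁻¹` is fixed by `φ`, and a fixed point lying in `γ_i` lies in `γ_{i+1}` by injectivity of
`x ↦ φ̄(x)·x⁻¹` on `γ_i/γ_{i+1}`. For surjectivity, if `L x` agrees with `g` modulo `γ_i`,
surjectivity of that map provides `y ∈ γ_i` such that `L (x * y)` agrees with `g` modulo
`γ_{i+1}`; the computation works because `γ_i` is central modulo `γ_{i+1}`.
-/

section

open Subgroup

variable {G : Type*} [Group G]

def langMap (φ : G →* G) (x : G) : G := φ x⁻¹ * x

lemma langMap_mul (φ : G →* G) (x y : G) :
    langMap φ (x * y) = (φ y)⁻¹ * langMap φ x * y := by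
  simp only [langMap, mul_inv_rev, map_mul, map_inv]
  group

lemma map_mul_inv_eq_of_langMap_eq {φ : G →* G} {x y : G} (h : langMap φ x = langMap φ y) :
    φ (x * y⁻¹) = x * y⁻¹ := by
  simp only [langMap, map_inv] at h
  calc φ (x * y⁻¹) = x * ((φ x)⁻¹ * x)⁻¹ * ((φ y)⁻¹ * y) * y⁻¹ := by
        rw [map_mul, map_inv]; group
    _ = x * y⁻¹ := by rw [h]; group

lemma map_mem_lowerCentralSeries (φ : G →* G) {i : ℕ} {x : G}
    (hx : x ∈ (⊤ : Subgroup G).lowerCentralSeries i) :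
    φ x ∈ (⊤ : Subgroup G).lowerCentralSeries i := by
  have : φ x ∈ ((⊤ : Subgroup G).lowerCentralSeries i).map φ := mem_map_of_mem φ hx
  rw [map_lowerCentralSeries] at this
  exact lowerCentralSeries_mono i le_top this

lemma commute_mk_of_mem_lowerCentralSeries {i : ℕ} {u : G}
    (hu : u ∈ (⊤ : Subgroup G).lowerCentralSeries i) (v : G) :
    Commute (u : G ⧸ (⊤ : Subgroup G).lowerCentralSeries (i + 1)) v := by
  rw [← commutatorElement_eq_one_iff_commute, ← QuotientGroup.mk'_apply,
    ← QuotientGroup.mk'_apply, ← map_commutatorElement, QuotientGroup.mk'_apply,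
    QuotientGroup.eq_one_iff]
  exact commutator_mem_commutator hu (mem_top v)

lemma eq_one_of_forall_mem_lowerCentralSeries [Group.IsNilpotent G] {x : G}
    (hx : ∀ i, x ∈ (⊤ : Subgroup G).lowerCentralSeries i) : x = 1 := by
  obtain ⟨n, hn⟩ := Subgroup.nilpotent_iff_lowerCentralSeries.mp ‹_›
  simpa [hn] using hx n

lemma eq_one_of_map_eq_self [Group.IsNilpotent G] {φ : G →* G}
    (hinj : ∀ i, ∀ x ∈ (⊤ : Subgroup G).lowerCentralSeries i,
      φ x * x⁻¹ ∈ (⊤ : Subgroup G).lowerCentralSeries (i + 1) →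
        x ∈ (⊤ : Subgroup G).lowerCentralSeries (i + 1))
    {z : G} (hz : φ z = z) : z = 1 := by
  refine eq_one_of_forall_mem_lowerCentralSeries fun i => ?_
  induction i with
  | zero => exact mem_top z
  | succ i ih => exact hinj i z ih (by simp [hz, one_mem])

lemma langMap_inv_mul_mem_succ {φ : G →* G} {i : ℕ} {x y g : G}
    (hy : y ∈ (⊤ : Subgroup G).lowerCentralSeries i)
    (hyw : φ y * y⁻¹ * ((langMap φ x)⁻¹ * g) ∈
      (⊤ : Subgroup G).lowerCentralSeries (i + 1)) :
    (langMap φ (x * y))⁻¹ * g ∈ (⊤ : Subgroup G).lowerCentralSeries (i + 1) := by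
  set N := (⊤ : Subgroup G).lowerCentralSeries (i + 1)
  set s := langMap φ x
  set w := s⁻¹ * g
  have hg : g = s * w := (mul_inv_cancel_left s g).symm
  rw [← QuotientGroup.eq_one_iff] at hyw ⊢
  have hφy := commute_mk_of_mem_lowerCentralSeries (map_mem_lowerCentralSeries φ hy) s
  have hyφ := commute_mk_of_mem_lowerCentralSeries hy (φ y)
  rw [langMap_mul, hg]
  simp only [QuotientGroup.mk_mul, QuotientGroup.mk_inv, mul_inv_rev, inv_inv] at hyw ⊢
  calc (y : G ⧸ N)⁻¹ * ((s : G ⧸ N)⁻¹ * (φ y : G ⧸ N)) * ((s : G ⧸ N) * w)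
      = (y : G ⧸ N)⁻¹ * ((s : G ⧸ N)⁻¹ * ((φ y : G ⧸ N) * s)) * w := by group
    _ = (φ y : G ⧸ N) * (y : G ⧸ N)⁻¹ * w := by
      rw [hφy.eq, inv_mul_cancel_left, hyφ.inv_left.eq]
    _ = 1 := hyw

lemma exists_langMap_inv_mul_mem {φ : G →* G}
    (hsurj : ∀ i : ℕ, ∀ x ∈ (⊤ : Subgroup G).lowerCentralSeries i,
      ∃ y ∈ (⊤ : Subgroup G).lowerCentralSeries i,
        φ y * y⁻¹ * x⁻¹ ∈ (⊤ : Subgroup G).lowerCentralSeries (i + 1))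
    (g : G) (i : ℕ) :
    ∃ x, (langMap φ x)⁻¹ * g ∈ (⊤ : Subgroup G).lowerCentralSeries i := by
  induction i with
  | zero => exact ⟨1, mem_top _⟩
  | succ i ih =>
    obtain ⟨x, hx⟩ := ih
    obtain ⟨y, hy, hyw⟩ := hsurj i _ (inv_mem hx)
    rw [inv_inv] at hyw
    exact ⟨x * y, langMap_inv_mul_mem_succ hy hyw⟩

end

/-- If `G` is a nilpotent group and `φ : G → G` an endomorphism such that, for every `i`,
the map `x ↦ φ̄(x)·x⁻¹` induced on the abelian quotient `γ_i(G)/γ_{i+1}(G)` of the lower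
central series is bijective, then `x ↦ φ(x⁻¹)·x` is a bijection on `G`.
(Here bijectivity of the induced map is expressed concretely modulo `γ_{i+1}(G)`.) -/
theorem stmt0 {G : Type*} [Group G] [Group.IsNilpotent G] (φ : G →* G)
    (hsurj : ∀ i : ℕ, ∀ x ∈ (⊤ : Subgroup G).lowerCentralSeries i,
      ∃ y ∈ (⊤ : Subgroup G).lowerCentralSeries i, φ y * y⁻¹ * x⁻¹ ∈ (⊤ : Subgroup G).lowerCentralSeries (i + 1))
    (hinj : ∀ i : ℕ, ∀ x ∈ (⊤ : Subgroup G).lowerCentralSeries i, ∀ y ∈ (⊤ : Subgroup G).lowerCentralSeries i,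
      (φ x * x⁻¹) * (φ y * y⁻¹)⁻¹ ∈ (⊤ : Subgroup G).lowerCentralSeries (i + 1) →
        x * y⁻¹ ∈ (⊤ : Subgroup G).lowerCentralSeries (i + 1)) :
    Function.Bijective (fun x : G => φ x⁻¹ * x) := by
  refine ⟨fun x y hxy => ?_, fun g => ?_⟩
  · have hfix : ∀ i, ∀ x ∈ (⊤ : Subgroup G).lowerCentralSeries i,
        φ x * x⁻¹ ∈ (⊤ : Subgroup G).lowerCentralSeries (i + 1) →
          x ∈ (⊤ : Subgroup G).lowerCentralSeries (i + 1) := fun i x hx h => by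
      simpa using hinj i x hx 1 (Subgroup.one_mem _) (by simpa using h)
    exact mul_inv_eq_one.mp (eq_one_of_map_eq_self hfix (map_mul_inv_eq_of_langMap_eq hxy))
  · obtain ⟨n, hn⟩ := Subgroup.nilpotent_iff_lowerCentralSeries.mp ‹_›
    obtain ⟨x, hx⟩ := exists_langMap_inv_mul_mem hsurj g n
    rw [hn, Subgroup.mem_bot, inv_mul_eq_one] at hx
    exact ⟨x, hx⟩
end

section
/- Let G be a group, T a nonempty set equipped with a free and transitive right G-action, φ_G : G → G a group homomorphism, and φ_T : T → T a map satisfying φ_T(t·g) = φ_T(t)·φ_G(g) for all t ∈ T and g ∈ G. If the map G → G given by g ↦ g·φ_G(g)⁻¹ is bijective, then φ_T has exactly one fixed point: there exists a unique t ∈ T with φ_T(t) = t. -/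
/-! Choose any `t₀ : T` and write `φT t₀ = t₀ • h`. Surjectivity of `g ↦ g * (φG g)⁻¹` gives
`g` with `g * (φG g)⁻¹ = h`, and then `t₀ • g` is fixed. Two fixed points differ by some `k`
with `φG k = k`, i.e. with `k * (φG k)⁻¹ = 1 * (φG 1)⁻¹`, so injectivity forces `k = 1`. -/

theorem eq_one_of_map_eq_self_s1 {G : Type*} [Group G] {φ : G →* G}
    (hinj : Function.Injective (fun g : G => g * (φ g)⁻¹)) {k : G} (hk : φ k = k) : k = 1 :=
  hinj (by simp only [hk, mul_inv_cancel, map_one, inv_one, mul_one])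

section FreeAction

variable {G T : Type*} [Group G] {act : T → G → T}

theorem act_left_cancel (act_mul : ∀ t g h, act t (g * h) = act (act t g) h)
    (act_free : ∀ t g, act t g = t → g = 1) {t : T} {a b : G} (hab : act t a = act t b) :
    a = b := by
  have : act (act t a) (a⁻¹ * b) = act t a := by rw [← act_mul, mul_inv_cancel_left, hab]
  exact inv_mul_eq_one.mp (act_free _ _ this)

theorem exists_isFixedPt_of_surjective (act_mul : ∀ t g h, act t (g * h) = act (act t g) h)
    (act_trans : ∀ t t' : T, ∃ g : G, act t g = t') {φG : G →* G} {φT : T → T}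
    (hcompat : ∀ t g, φT (act t g) = act (φT t) (φG g))
    (hsurj : Function.Surjective (fun g : G => g * (φG g)⁻¹)) (t₀ : T) :
    ∃ t, Function.IsFixedPt φT t := by
  obtain ⟨h, hh⟩ := act_trans t₀ (φT t₀)
  obtain ⟨g, hg⟩ := hsurj h
  refine ⟨act t₀ g, ?_⟩
  calc φT (act t₀ g) = act t₀ (g * (φG g)⁻¹ * φG g) := by
        rw [hcompat, ← hh, ← act_mul, ← hg]
    _ = act t₀ g := by rw [inv_mul_cancel_right]

theorem isFixedPt_unique_of_injective (act_one : ∀ t, act t 1 = t)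
    (act_mul : ∀ t g h, act t (g * h) = act (act t g) h)
    (act_free : ∀ t g, act t g = t → g = 1) (act_trans : ∀ t t' : T, ∃ g : G, act t g = t')
    {φG : G →* G} {φT : T → T} (hcompat : ∀ t g, φT (act t g) = act (φT t) (φG g))
    (hinj : Function.Injective (fun g : G => g * (φG g)⁻¹)) {t t' : T}
    (ht : Function.IsFixedPt φT t) (ht' : Function.IsFixedPt φT t') : t' = t := by
  obtain ⟨k, rfl⟩ := act_trans t t'
  have hk : φG k = k := act_left_cancel act_mul act_free <|
    calc act t (φG k) = φT (act t k) := by rw [hcompat, ht.eq]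
      _ = act t k := ht'.eq
  rw [eq_one_of_map_eq_self_s1 hinj hk, act_one]

end FreeAction

/-- If `T` is a nonempty set with a free and transitive right action of a group `G`,
`φG : G → G` is a homomorphism and `φT : T → T` is compatible with the action via `φG`,
and `g ↦ g·φG(g)⁻¹` is bijective on `G`, then `φT` has a unique fixed point. -/
theorem stmt1 {G T : Type*} [Group G] [Nonempty T]
    (act : T → G → T)
    (act_one : ∀ t, act t 1 = t)
    (act_mul : ∀ t g h, act t (g * h) = act (act t g) h)
    (act_free : ∀ t g, act t g = t → g = 1)
    (act_trans : ∀ t t' : T, ∃ g : G, act t g = t')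
    (φG : G →* G) (φT : T → T)
    (hcompat : ∀ t g, φT (act t g) = act (φT t) (φG g))
    (hbij : Function.Bijective (fun g : G => g * (φG g)⁻¹)) :
    ∃! t : T, φT t = t := by
  obtain ⟨t, ht⟩ :=
    exists_isFixedPt_of_surjective act_mul act_trans hcompat hbij.2 (Classical.arbitrary T)
  exact ⟨t, ht, fun t' ht' =>
    isFixedPt_unique_of_injective act_one act_mul act_free act_trans hcompat hbij.1 ht ht'⟩
end

section
/- Let g ≥ 2 be an integer, and set α = g + √(g² − 1) and β = g − √(g² − 1) (so α·β = 1 and α > 1). Let (d_n)_{n ≥ 1} be a sequence of real numbers satisfying Σ_{k ∣ n} k·d_k = α^n + β^n for every n ≥ 1. Then the sequence n·d_n/α^n converges to 1 as n → ∞. -/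
open Filter

/-- Let `g ≥ 2`, `α = g + √(g²−1)`, `β = g − √(g²−1)`. If `Σ_{k ∣ n} k·d_k = α^n + β^n`
for all `n ≥ 1`, then `n·d_n/α^n → 1`. -/
theorem stmt5 (g : ℕ) (hg : 2 ≤ g) (α β : ℝ)
    (hα : α = (g : ℝ) + Real.sqrt ((g : ℝ) ^ 2 - 1))
    (hβ : β = (g : ℝ) - Real.sqrt ((g : ℝ) ^ 2 - 1))
    (d : ℕ → ℝ)
    (hd : ∀ n : ℕ, 1 ≤ n → ∑ k ∈ Nat.divisors n, (k : ℝ) * d k = α ^ n + β ^ n) :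
    Filter.Tendsto (fun n : ℕ => (n : ℝ) * d n / α ^ n) Filter.atTop (nhds 1) := by
  have hg2 : (2:ℝ) ≤ (g:ℝ) := by exact_mod_cast hg
  have hnn : (0:ℝ) ≤ (g:ℝ)^2 - 1 := by nlinarith
  set s := Real.sqrt ((g:ℝ)^2 - 1) with hs
  have hs0 : 0 ≤ s := Real.sqrt_nonneg _
  have hssq : s^2 = (g:ℝ)^2 - 1 := Real.sq_sqrt hnn
  have hαβ : α * β = 1 := by rw [hα, hβ]; nlinarith
  have hα2 : (2:ℝ) ≤ α := by rw [hα]; linarith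
  have hα1 : (1:ℝ) < α := by linarith
  have hα0 : (0:ℝ) < α := by linarith
  have hβ0 : (0:ℝ) < β := by nlinarith
  have hβ1 : β ≤ 1 := by nlinarith
  set t := Real.sqrt α with htdef
  have ht0 : 0 ≤ t := Real.sqrt_nonneg _
  have htsq : t^2 = α := Real.sq_sqrt hα0.le
  have ht1 : (1:ℝ) < t := by nlinarith
  -- Möbius inversion
  have hmob := (ArithmeticFunction.sum_eq_iff_sum_smul_moebius_eq
      (f := fun k => (k:ℝ) * d k) (g := fun n => α ^ n + β ^ n)).mp
      (fun n hn => hd n hn)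
  -- key bound
  have key : ∀ n : ℕ, 1 ≤ n → |(n:ℝ) * d n - α ^ n| ≤ 1 + 2 * n * t ^ n := by
    intro n hn
    have h := hmob n hn
    have h1n : ((1,n) : ℕ × ℕ) ∈ n.divisorsAntidiagonal := by
      rw [Nat.mem_divisorsAntidiagonal]; constructor <;> omega
    rw [← Finset.add_sum_erase _ _ h1n] at h
    simp only [ArithmeticFunction.moebius_apply_one, one_smul] at h
    have heq : (n:ℝ) * d n - α ^ n =
        β ^ n + ∑ x ∈ (n.divisorsAntidiagonal).erase (1,n),
          (ArithmeticFunction.moebius x.1 : ℝ) * (α ^ x.2 + β ^ x.2) := by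
      rw [← h]; simp only [zsmul_eq_mul]; ring
    rw [heq]
    have hterm : ∀ x ∈ (n.divisorsAntidiagonal).erase (1,n),
        |(ArithmeticFunction.moebius x.1 : ℝ) * (α ^ x.2 + β ^ x.2)| ≤ 2 * t ^ n := by
      intro x hx
      have hxm := Finset.mem_of_mem_erase hx
      have hxne := Finset.ne_of_mem_erase hx
      rw [Nat.mem_divisorsAntidiagonal] at hxm
      obtain ⟨hmul, hn0⟩ := hxm
      have hx1 : 2 ≤ x.1 := by
        rcases Nat.lt_or_ge x.1 2 with h2 | h2
        · interval_cases h : x.1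
          · omega
          · exfalso; apply hxne
            have : x.2 = n := by omega
            exact Prod.ext h this
        · exact h2
      have h2x2 : 2 * x.2 ≤ n := by
        calc 2 * x.2 ≤ x.1 * x.2 := Nat.mul_le_mul_right _ hx1
        _ = n := hmul
      have hαx : α ^ x.2 ≤ t ^ n := by
        calc α ^ x.2 = t ^ (2 * x.2) := by rw [pow_mul, htsq]
        _ ≤ t ^ n := pow_le_pow_right₀ ht1.le h2x2
      have hβx : β ^ x.2 ≤ t ^ n :=
        le_trans (pow_le_one₀ hβ0.le hβ1) (by simpa using pow_le_pow_right₀ ht1.le (Nat.zero_le n) : (1:ℝ) ≤ t ^ n)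
      have hpos : 0 ≤ α ^ x.2 + β ^ x.2 := by positivity
      rw [abs_mul, abs_of_nonneg hpos]
      have hμ : |(ArithmeticFunction.moebius x.1 : ℝ)| ≤ 1 := by
        have := ArithmeticFunction.abs_moebius_le_one (n := x.1)
        exact_mod_cast this
      calc |(ArithmeticFunction.moebius x.1 : ℝ)| * (α ^ x.2 + β ^ x.2)
          ≤ 1 * (α ^ x.2 + β ^ x.2) := mul_le_mul_of_nonneg_right hμ hpos
        _ = α ^ x.2 + β ^ x.2 := one_mul _
        _ ≤ 2 * t ^ n := by linarith
    have hcard : ((n.divisorsAntidiagonal).erase (1,n)).card ≤ n := by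
      have hsub : (n.divisorsAntidiagonal).card ≤ n + 1 := by
        have : (n.divisorsAntidiagonal).card ≤ (Finset.range (n+1)).card := by
          apply Finset.card_le_card_of_injOn (fun x => x.2)
          · intro x hx
            rw [Finset.mem_coe, Nat.mem_divisorsAntidiagonal] at hx
            simp only [Finset.mem_coe, Finset.mem_range]
            have : x.2 ∣ n := Dvd.intro_left _ hx.1
            have := Nat.le_of_dvd (by omega) this
            omega
          · intro x hx y hy hxy
            simp only [Finset.mem_coe, Nat.mem_divisorsAntidiagonal] at hx hy
            simp only at hxy
            have hx2 : x.2 ≠ 0 := by rintro h; rw [h, mul_zero] at hx; exact hx.2 hx.1.symm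
            have : x.1 = y.1 := by
              have := hx.1.trans hy.1.symm
              rw [hxy] at this
              exact Nat.eq_of_mul_eq_mul_right (Nat.pos_of_ne_zero (hxy ▸ hx2)) this
            exact Prod.ext this hxy
        simpa using this
      rw [Finset.card_erase_of_mem h1n]
      omega
    calc |β ^ n + ∑ x ∈ (n.divisorsAntidiagonal).erase (1,n),
            (ArithmeticFunction.moebius x.1 : ℝ) * (α ^ x.2 + β ^ x.2)|
        ≤ |β ^ n| + |∑ x ∈ (n.divisorsAntidiagonal).erase (1,n),
            (ArithmeticFunction.moebius x.1 : ℝ) * (α ^ x.2 + β ^ x.2)| := abs_add_le _ _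
      _ ≤ 1 + 2 * n * t ^ n := by
          have h1 : |β ^ n| ≤ 1 := by
            rw [abs_of_nonneg (by positivity)]
            exact pow_le_one₀ hβ0.le hβ1
          have h2 : |∑ x ∈ (n.divisorsAntidiagonal).erase (1,n),
              (ArithmeticFunction.moebius x.1 : ℝ) * (α ^ x.2 + β ^ x.2)| ≤ 2 * n * t ^ n := by
            calc |∑ x ∈ (n.divisorsAntidiagonal).erase (1,n),
                (ArithmeticFunction.moebius x.1 : ℝ) * (α ^ x.2 + β ^ x.2)|
                ≤ ∑ x ∈ (n.divisorsAntidiagonal).erase (1,n),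
                  |(ArithmeticFunction.moebius x.1 : ℝ) * (α ^ x.2 + β ^ x.2)| :=
                  Finset.abs_sum_le_sum_abs _ _
              _ ≤ ((n.divisorsAntidiagonal).erase (1,n)).card • (2 * t ^ n) :=
                  Finset.sum_le_card_nsmul _ _ _ hterm
              _ = ((n.divisorsAntidiagonal).erase (1,n)).card * (2 * t ^ n) := by
                  rw [nsmul_eq_mul]
              _ ≤ n * (2 * t ^ n) := by
                  apply mul_le_mul_of_nonneg_right _ (by positivity)
                  exact_mod_cast hcard
              _ = 2 * n * t ^ n := by ring
          linarith
  -- limit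
  rw [← tendsto_sub_nhds_zero_iff]
  have hbnd : Tendsto (fun n : ℕ => (1/α) ^ n + 2 * ((n:ℝ) * (1/t) ^ n)) atTop (nhds 0) := by
    have h1 : Tendsto (fun n : ℕ => (1/α) ^ n) atTop (nhds 0) :=
      tendsto_pow_atTop_nhds_zero_of_lt_one (by positivity) (by rw [div_lt_one hα0]; linarith)
    have h2 : Tendsto (fun n : ℕ => (n:ℝ) * (1/t) ^ n) atTop (nhds 0) :=
      tendsto_self_mul_const_pow_of_lt_one (by positivity)
        (by rw [div_lt_one (by linarith)]; linarith)
    have := h1.add (h2.const_mul 2)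
    simpa using this
  apply squeeze_zero_norm' _ hbnd
  filter_upwards [eventually_ge_atTop 1] with n hn
  have hαn : (0:ℝ) < α ^ n := by positivity
  have : (n:ℝ) * d n / α ^ n - 1 = ((n:ℝ) * d n - α ^ n) / α ^ n := by
    field_simp
  rw [Real.norm_eq_abs, this, abs_div, abs_of_pos hαn, div_le_iff₀ hαn]
  calc |(n:ℝ) * d n - α ^ n| ≤ 1 + 2 * n * t ^ n := key n hn
    _ ≤ ((1/α) ^ n + 2 * ((n:ℝ) * (1/t) ^ n)) * α ^ n := by
        have hone : (1/α) ^ n * α ^ n = 1 := by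
          rw [← mul_pow]; rw [one_div_mul_cancel (by linarith)]; exact one_pow n
        have htα : (1/t) ^ n * α ^ n = t ^ n := by
          rw [← htsq, ← pow_mul, two_mul, pow_add, ← mul_assoc, ← mul_pow,
            one_div_mul_cancel (by linarith), one_pow, one_mul]
        nlinarith [htα, hone]
end

section
/- Let m ≥ 2 be an integer, let g be a real number with 0 ≤ g < m, and let P be a polynomial with real coefficients. Let (d_n)_{n ≥ 1} be a sequence of rational numbers satisfying Σ_{k ∣ n} k·d_k = m^n for every n ≥ 1. Then there exists N such that for all n ≥ N, d_n > P(n)·g^n. -/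
open Filter

private lemma aux_poly_geom (P : Polynomial ℝ) {r : ℝ} (hr : |r| < 1) :
    Tendsto (fun n : ℕ => P.eval (n:ℝ) * r ^ n) atTop (nhds 0) := by
  have h : ∀ i : ℕ, Tendsto (fun n : ℕ => P.coeff i * ((n : ℝ) ^ i * r ^ n))
      atTop (nhds 0) := by
    intro i
    simpa using
      ((summable_pow_mul_geometric_of_norm_lt_one (R := ℝ) i (by rwa [Real.norm_eq_abs])).tendsto_atTop_zero).const_mul
        (P.coeff i)
  have hsum := tendsto_finset_sum (Finset.range (P.natDegree + 1)) (fun i _ => h i)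
  simp only [Finset.sum_const_zero] at hsum
  refine hsum.congr fun n => ?_
  rw [Polynomial.eval_eq_sum_range, Finset.sum_mul]
  exact Finset.sum_congr rfl fun i _ => by ring

private lemma aux_geom_sum (m : ℕ) (hm : 2 ≤ m) (K : ℕ) :
    ∑ k ∈ Finset.Icc 1 K, (m : ℚ) ^ k ≤ (m : ℚ) ^ (K + 1) - m := by
  induction K with
  | zero => simp
  | succ K ih =>
    rw [Finset.sum_Icc_succ_top (by omega)]
    have h2 : (2 : ℚ) ≤ (m : ℚ) := by exact_mod_cast hm
    have hpow : (0:ℚ) < (m:ℚ) ^ (K+1) := by positivity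
    calc ∑ k ∈ Finset.Icc 1 K, (m:ℚ)^k + (m:ℚ)^(K+1)
        ≤ ((m:ℚ)^(K+1) - m) + (m:ℚ)^(K+1) := by linarith
      _ ≤ (m:ℚ)^(K+2) - m := by
          have : (2:ℚ) * (m:ℚ)^(K+1) ≤ (m:ℚ) * (m:ℚ)^(K+1) := by nlinarith
          have h3 : (m:ℚ)^(K+2) = (m:ℚ) * (m:ℚ)^(K+1) := by ring
          linarith

/-- If `m ≥ 2`, `0 ≤ g < m`, `P` is a real polynomial, and `Σ_{k ∣ n} k·d_k = m^n` for
all `n ≥ 1`, then eventually `d_n > P(n)·g^n`. -/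
theorem stmt6 (m : ℕ) (hm : 2 ≤ m) (g : ℝ) (hg0 : 0 ≤ g) (hgm : g < (m : ℝ))
    (P : Polynomial ℝ) (d : ℕ → ℚ)
    (hd : ∀ n : ℕ, 1 ≤ n → ∑ k ∈ Nat.divisors n, (k : ℚ) * d k = (m : ℚ) ^ n) :
    ∃ N : ℕ, ∀ n : ℕ, N ≤ n → P.eval (n : ℝ) * g ^ n < (d n : ℝ) := by
  have hm1 : (1 : ℚ) < (m : ℚ) := by exact_mod_cast (by omega : 1 < m)
  have hmQ : (0 : ℚ) < (m : ℚ) := by linarith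
  -- lower bound is nonnegative
  have hCnonneg : ∀ k : ℕ, 1 ≤ k → (0 : ℚ) ≤ (m:ℚ)^k - (m:ℚ)^(k/2+1) + m := by
    intro k hk
    rcases eq_or_lt_of_le hk with h1 | h2
    · simp [← h1]
    · have hle : k/2 + 1 ≤ k := by omega
      have : (m:ℚ)^(k/2+1) ≤ (m:ℚ)^k := pow_le_pow_right₀ (le_of_lt hm1) hle
      linarith
  -- main claim by strong induction
  have claim : ∀ n : ℕ, 1 ≤ n →
      ((m:ℚ)^n - (m:ℚ)^(n/2+1) + m ≤ (n:ℚ) * d n ∧ (n:ℚ) * d n ≤ (m:ℚ)^n) := by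
    intro n
    induction n using Nat.strong_induction_on with
    | _ n ih =>
      intro hn
      have key := hd n hn
      rw [← Nat.cons_self_properDivisors (by omega : n ≠ 0), Finset.sum_cons] at key
      set S := ∑ k ∈ n.properDivisors, (k:ℚ) * d k with hS
      have hsub : n.properDivisors ⊆ Finset.Icc 1 (n/2) := by
        intro k hk
        obtain ⟨hkd, hkn⟩ := Nat.mem_properDivisors.mp hk
        have hk1 : 1 ≤ k := Nat.pos_of_mem_divisors (Nat.mem_divisors.mpr ⟨hkd, by omega⟩)
        obtain ⟨c, hc⟩ := hkd
        have hc2 : 2 ≤ c := by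
          rcases Nat.lt_or_ge c 2 with h | h
          · interval_cases c <;> omega
          · exact h
        have : k * 2 ≤ n := by calc k * 2 ≤ k * c := by exact Nat.mul_le_mul_left k hc2
                                  _ = n := hc.symm
        exact Finset.mem_Icc.mpr ⟨hk1, Nat.le_div_iff_mul_le (by norm_num) |>.mpr this⟩
      have hS0 : 0 ≤ S := by
        apply Finset.sum_nonneg
        intro k hk
        obtain ⟨hkd, hkn⟩ := Nat.mem_properDivisors.mp hk
        have hk1 : 1 ≤ k := Nat.pos_of_mem_divisors (Nat.mem_divisors.mpr ⟨hkd, by omega⟩)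
        have := (ih k hkn hk1).1
        have := hCnonneg k hk1
        linarith
      have hSup : S ≤ (m:ℚ)^(n/2+1) - m := by
        have h1 : S ≤ ∑ k ∈ n.properDivisors, (m:ℚ)^k := by
          apply Finset.sum_le_sum
          intro k hk
          obtain ⟨hkd, hkn⟩ := Nat.mem_properDivisors.mp hk
          exact (ih k hkn (Nat.pos_of_mem_divisors (Nat.mem_divisors.mpr ⟨hkd, by omega⟩))).2
        have h2 : ∑ k ∈ n.properDivisors, (m:ℚ)^k ≤ ∑ k ∈ Finset.Icc 1 (n/2), (m:ℚ)^k :=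
          Finset.sum_le_sum_of_subset_of_nonneg hsub (fun k _ _ => by positivity)
        calc S ≤ ∑ k ∈ Finset.Icc 1 (n/2), (m:ℚ)^k := le_trans h1 h2
          _ ≤ (m:ℚ)^(n/2+1) - m := aux_geom_sum m hm (n/2)
      constructor
      · linarith
      · linarith
  -- limit argument
  have hmR : (0:ℝ) < (m:ℝ) := by exact_mod_cast (by omega : 0 < m)
  have hm1R : (1:ℝ) ≤ (m:ℝ) := by exact_mod_cast (by omega : 1 ≤ m)
  have hsq1 : (1:ℝ) ≤ Real.sqrt m := Real.one_le_sqrt.mpr hm1R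
  have hsqm : Real.sqrt m < (m:ℝ) := by
    have h2 : (2:ℝ) ≤ (m:ℝ) := by exact_mod_cast hm
    nlinarith [Real.sq_sqrt (le_of_lt hmR), Real.sqrt_nonneg (m:ℝ)]
  have h1 : Tendsto (fun n : ℕ => (Polynomial.X * P).eval (n:ℝ) * (g / m) ^ n)
      atTop (nhds 0) := by
    apply aux_poly_geom
    rw [abs_of_nonneg (by positivity)]
    rw [div_lt_one hmR]; exact hgm
  have h2 : Tendsto (fun n : ℕ => (m:ℝ) * (Real.sqrt m / m) ^ n) atTop (nhds 0) := by
    have := tendsto_pow_atTop_nhds_zero_of_lt_one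
      (by positivity : (0:ℝ) ≤ Real.sqrt m / m) ((div_lt_one hmR).mpr hsqm)
    simpa using this.const_mul (m:ℝ)
  have hsum : Tendsto (fun n : ℕ =>
      (Polynomial.X * P).eval (n:ℝ) * (g / m) ^ n + (m:ℝ) * (Real.sqrt m / m) ^ n)
      atTop (nhds 0) := by simpa using h1.add h2
  have hev : ∀ᶠ n : ℕ in atTop,
      (Polynomial.X * P).eval (n:ℝ) * (g / m) ^ n + (m:ℝ) * (Real.sqrt m / m) ^ n < 1 :=
    hsum.eventually_lt_const (by norm_num)
  obtain ⟨N0, hN0⟩ := eventually_atTop.mp hev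
  refine ⟨max N0 1, fun n hn => ?_⟩
  have hn1 : 1 ≤ n := le_trans (le_max_right N0 1) hn
  have hnN : N0 ≤ n := le_trans (le_max_left N0 1) hn
  have hnR : (0:ℝ) < (n:ℝ) := by exact_mod_cast hn1
  -- lower bound on n * d n, cast to ℝ
  have hlowQ := (claim n hn1).1
  have hlow : (m:ℝ)^n - (m:ℝ)^(n/2+1) + m ≤ (n:ℝ) * (d n : ℝ) := by
    exact_mod_cast hlowQ
  -- sqrt bound
  have hsqb : (m:ℝ)^(n/2+1) ≤ (m:ℝ) * Real.sqrt m ^ n := by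
    have h1 : (m:ℝ)^(n/2) = Real.sqrt m ^ (2 * (n/2)) := by
      rw [pow_mul, Real.sq_sqrt (le_of_lt hmR)]
    have h2 : Real.sqrt m ^ (2 * (n/2)) ≤ Real.sqrt m ^ n :=
      pow_le_pow_right₀ hsq1 (by omega)
    calc (m:ℝ)^(n/2+1) = (m:ℝ) * (m:ℝ)^(n/2) := by ring
      _ ≤ (m:ℝ) * Real.sqrt m ^ n := by
          rw [h1]; exact mul_le_mul_of_nonneg_left h2 (le_of_lt hmR)
  -- from the limit bound
  have hun := hN0 n hnN
  have hmpow : (0:ℝ) < (m:ℝ)^n := by positivity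
  have hmain : (n:ℝ) * (P.eval (n:ℝ) * g ^ n) + (m:ℝ) * Real.sqrt m ^ n < (m:ℝ)^n := by
    have := mul_lt_mul_of_pos_right hun hmpow
    rw [one_mul, add_mul] at this
    have e1 : (Polynomial.X * P).eval (n:ℝ) * (g / m) ^ n * (m:ℝ)^n
        = (n:ℝ) * (P.eval (n:ℝ) * g ^ n) := by
      rw [div_pow]
      field_simp
      rw [Polynomial.eval_mul, Polynomial.eval_X]
      ring
    have e2 : (m:ℝ) * (Real.sqrt m / m) ^ n * (m:ℝ)^n = (m:ℝ) * Real.sqrt m ^ n := by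
      rw [div_pow]
      field_simp
    rw [e1, e2] at this
    exact this
  have final : (n:ℝ) * (P.eval (n:ℝ) * g ^ n) < (n:ℝ) * (d n : ℝ) := by
    have : (n:ℝ) * (P.eval (n:ℝ) * g ^ n) < (m:ℝ)^n - (m:ℝ) * Real.sqrt m ^ n := by
      linarith
    have hmRpos : (0:ℝ) < (m:ℝ) := hmR
    linarith
  exact lt_of_mul_lt_mul_left final (le_of_lt hnR)
end

section
/- Let L be a field of characteristic zero, A a commutative L-algebra, Ω = Ω_{A/L} the module of Kähler differentials with universal derivation d : A → Ω. Suppose α_1, …, α_m ∈ Ω are elements such that every ω ∈ Ω can be written as an L-linear combination of α_1, …, α_m plus an exact form da for some a ∈ A. Then for every r ≥ 1 and every strictly upper-triangular r×r matrix ω with entries in Ω, there exists an upper-triangular unipotent matrix G ∈ GL_r(A) such that the gauge-transformed matrix G⁻¹ωG + G⁻¹dG is strictly upper-triangular with every entry lying in the L-linear span of α_1, …, α_m (here dG denotes the matrix obtained from G by applying d entrywise, and matrix products use the A-module structure of Ω). -/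
/-!
Filter matrices by the superdiagonal below which they vanish. If the gauge class of `ω` has a
representative whose entries below the `e`-th superdiagonal already lie in `V`, write each entry
`x` on the `e`-th superdiagonal with `x + da ∈ V` and gauge by `1 + N`, where `N` carries these
`a` on that superdiagonal. Modulo the next step of the filtration this only adds `dN`, which moves
the entries on the `e`-th superdiagonal into `V` and leaves those below it alone. Gauge
transformations compose, so `r` such steps put every entry in `V`.
-/

namespace Matrix

def leftMul {n A M : Type*} [Fintype n] [SMul A M] [AddCommMonoid M] (P : Matrix n n A)
    (X : Matrix n n M) : Matrix n n M :=
  of fun i j => ∑ k, P i k • X k j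

def rightMul {n A M : Type*} [Fintype n] [SMul A M] [AddCommMonoid M] (X : Matrix n n M)
    (P : Matrix n n A) : Matrix n n M :=
  of fun i j => ∑ k, P k j • X i k

local infixr:73 " •ₘ " => leftMul
local infixl:73 " ₘ• " => rightMul

section MixedProducts

variable {n A M : Type*} [Fintype n] [CommRing A] [AddCommGroup M] [Module A M]

theorem leftMul_add (P : Matrix n n A) (X Y : Matrix n n M) :
    P •ₘ (X + Y) = P •ₘ X + P •ₘ Y := by
  ext i j; simp [leftMul, smul_add, Finset.sum_add_distrib]

theorem sub_leftMul (P Q : Matrix n n A) (X : Matrix n n M) :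
    (P - Q) •ₘ X = P •ₘ X - Q •ₘ X := by
  ext i j; simp [leftMul, sub_smul]

theorem rightMul_add (X Y : Matrix n n M) (P : Matrix n n A) :
    (X + Y) ₘ• P = X ₘ• P + Y ₘ• P := by
  ext i j; simp [rightMul, smul_add, Finset.sum_add_distrib]

theorem rightMul_sub (X : Matrix n n M) (P Q : Matrix n n A) :
    X ₘ• (P - Q) = X ₘ• P - X ₘ• Q := by
  ext i j; simp [rightMul, sub_smul]

theorem mul_leftMul (P Q : Matrix n n A) (X : Matrix n n M) :
    (P * Q) •ₘ X = P •ₘ (Q •ₘ X) := by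
  ext i j
  simp only [leftMul, of_apply, mul_apply, Finset.sum_smul, Finset.smul_sum, smul_smul]
  exact Finset.sum_comm

theorem rightMul_mul (X : Matrix n n M) (P Q : Matrix n n A) :
    X ₘ• (P * Q) = (X ₘ• P) ₘ• Q := by
  ext i j
  simp only [rightMul, of_apply, mul_apply, Finset.sum_smul, Finset.smul_sum, smul_smul,
    mul_comm (Q _ j)]
  exact Finset.sum_comm

theorem leftMul_rightMul (P Q : Matrix n n A) (X : Matrix n n M) :
    P •ₘ (X ₘ• Q) = (P •ₘ X) ₘ• Q := by
  ext i j
  simp only [leftMul, rightMul, of_apply, Finset.smul_sum, smul_smul, mul_comm (P i _)]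
  exact Finset.sum_comm

variable [DecidableEq n]

theorem one_leftMul (X : Matrix n n M) : (1 : Matrix n n A) •ₘ X = X := by
  ext i j; simp [leftMul, one_apply, ite_smul]

theorem rightMul_one (X : Matrix n n M) : X ₘ• (1 : Matrix n n A) = X := by
  ext i j; simp [rightMul, one_apply, ite_smul]

end MixedProducts

section Gauge

variable {n K A M : Type*} [Fintype n] [DecidableEq n] [CommRing K] [CommRing A] [Algebra K A]
  [AddCommGroup M] [Module A M] [Module K M] (D : Derivation K A M)

omit [Fintype n] in
theorem map_derivation_one : (1 : Matrix n n A).map D = 0 := by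
  ext i j
  rcases eq_or_ne i j with rfl | hij <;> simp [*]

omit [DecidableEq n] in
theorem map_derivation_mul (P Q : Matrix n n A) :
    (P * Q).map D = P •ₘ Q.map D + P.map D ₘ• Q := by
  ext i j
  simp [leftMul, rightMul, mul_apply, Finset.sum_add_distrib]

noncomputable def gaugeTransform (G : Matrix n n A) (ω : Matrix n n M) : Matrix n n M :=
  G⁻¹ •ₘ (ω ₘ• G) + G⁻¹ •ₘ G.map D

theorem gaugeTransform_apply (G : Matrix n n A) (ω : Matrix n n M) (i j : n) :
    gaugeTransform D G ω i j =
      (∑ k, ∑ l, (G⁻¹ i k * G l j) • ω k l) + ∑ k, G⁻¹ i k • D (G k j) := by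
  simp only [gaugeTransform, add_apply, leftMul, rightMul, map_apply, of_apply,
    Finset.smul_sum, smul_smul]

theorem gaugeTransform_one (ω : Matrix n n M) : gaugeTransform D 1 ω = ω := by
  simp [gaugeTransform, one_leftMul, rightMul_one, map_derivation_one]

theorem gaugeTransform_mul {G : Matrix n n A} (hG : IsUnit G.det) (H : Matrix n n A)
    (ω : Matrix n n M) :
    gaugeTransform D (G * H) ω = gaugeTransform D H (gaugeTransform D G ω) := by
  have hGG : G⁻¹ * G = 1 := nonsing_inv_mul G hG
  simp only [gaugeTransform, mul_inv_rev, map_derivation_mul, leftMul_add, rightMul_add,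
    mul_leftMul, rightMul_mul, leftMul_rightMul, ← mul_leftMul G⁻¹ G, hGG, one_leftMul]
  abel

end Gauge

section Filtration

variable {r : ℕ}

def VanishesBelowSuperdiag {R : Type*} [Zero R] (e : ℕ) (M : Matrix (Fin r) (Fin r) R) : Prop :=
  ∀ i j : Fin r, (j : ℕ) < i + e → M i j = 0

theorem vanishesBelowSuperdiag_zero_iff {R : Type*} [Zero R] {M : Matrix (Fin r) (Fin r) R} :
    VanishesBelowSuperdiag 0 M ↔ M.IsUpperTriangular :=
  Iff.rfl

namespace VanishesBelowSuperdiag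

variable {R : Type*}

theorem mono [Zero R] {e f : ℕ} {M : Matrix (Fin r) (Fin r) R} (h : VanishesBelowSuperdiag f M)
    (hef : e ≤ f) : VanishesBelowSuperdiag e M :=
  fun i j hij => h i j (by omega)

theorem add [AddZeroClass R] {e : ℕ} {M N : Matrix (Fin r) (Fin r) R}
    (hM : VanishesBelowSuperdiag e M) (hN : VanishesBelowSuperdiag e N) :
    VanishesBelowSuperdiag e (M + N) :=
  fun i j hij => by simp [hM i j hij, hN i j hij]

theorem neg [SubtractionMonoid R] {e : ℕ} {M : Matrix (Fin r) (Fin r) R}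
    (h : VanishesBelowSuperdiag e M) : VanishesBelowSuperdiag e (-M) :=
  fun i j hij => by simp [h i j hij]

theorem map [Zero R] {S : Type*} [Zero S] {e : ℕ} {M : Matrix (Fin r) (Fin r) R}
    (h : VanishesBelowSuperdiag e M) {f : R → S} (hf : f 0 = 0) :
    VanishesBelowSuperdiag e (M.map f) :=
  fun i j hij => by simp [h i j hij, hf]

theorem sum_apply_mul {S T : Type*} [Zero R] [Zero S] [AddCommMonoid T] {a b : ℕ}
    {P : Matrix (Fin r) (Fin r) R} {Q : Matrix (Fin r) (Fin r) S} (hP : VanishesBelowSuperdiag a P)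
    (hQ : VanishesBelowSuperdiag b Q) (f : R → S → T) (hf₁ : ∀ y, f 0 y = 0)
    (hf₂ : ∀ x, f x 0 = 0) :
    VanishesBelowSuperdiag (a + b) (of fun i j => ∑ k, f (P i k) (Q k j) : Matrix _ _ T) := by
  intro i j hij
  rw [of_apply]
  refine Finset.sum_eq_zero fun k _ => ?_
  by_cases hk : (k : ℕ) < i + a
  · rw [hP i k hk, hf₁]
  · rw [hQ k j (by omega), hf₂]

theorem mul [NonUnitalNonAssocSemiring R] {a b : ℕ} {P Q : Matrix (Fin r) (Fin r) R}
    (hP : VanishesBelowSuperdiag a P) (hQ : VanishesBelowSuperdiag b Q) :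
    VanishesBelowSuperdiag (a + b) (P * Q) :=
  hP.sum_apply_mul hQ (fun x y : R => x * y) zero_mul mul_zero

variable {A M : Type*} [CommRing A] [AddCommGroup M] [Module A M]

theorem leftMul {a b : ℕ} {P : Matrix (Fin r) (Fin r) A} {X : Matrix (Fin r) (Fin r) M}
    (hP : VanishesBelowSuperdiag a P) (hX : VanishesBelowSuperdiag b X) :
    VanishesBelowSuperdiag (a + b) (P •ₘ X) :=
  hP.sum_apply_mul hX (fun (p : A) (x : M) => p • x) (zero_smul A) smul_zero

theorem rightMul {a b : ℕ} {X : Matrix (Fin r) (Fin r) M} {P : Matrix (Fin r) (Fin r) A}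
    (hX : VanishesBelowSuperdiag a X) (hP : VanishesBelowSuperdiag b P) :
    VanishesBelowSuperdiag (a + b) (X ₘ• P) :=
  hX.sum_apply_mul hP (fun (x : M) (p : A) => p • x) (fun _ => smul_zero _) (zero_smul A)

end VanishesBelowSuperdiag

end Filtration

section Unipotent

variable {r : ℕ} {R : Type*} [CommRing R] {e : ℕ} {G H : Matrix (Fin r) (Fin r) R}

theorem vanishesBelowSuperdiag_one_sub_one_iff :
    VanishesBelowSuperdiag 1 (G - 1) ↔ (∀ i, G i i = 1) ∧ ∀ i j, j < i → G i j = 0 := by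
  refine ⟨fun h => ⟨fun i => ?_, fun i j hij => ?_⟩, fun ⟨hdiag, hlow⟩ i j hij => ?_⟩
  · simpa [sub_eq_zero] using h i i (by omega)
  · simpa [one_apply_ne hij.ne'] using h i j (by have := Fin.lt_def.mp hij; omega)
  · rcases (Nat.lt_succ_iff.mp hij).eq_or_lt with hji | hji
    · simp [Fin.ext hji, hdiag]
    · have hji : j < i := Fin.lt_def.mpr hji
      simp [hlow i j hji, one_apply_ne hji.ne']

theorem VanishesBelowSuperdiag.isUpperTriangular_of_sub_one (h : VanishesBelowSuperdiag e (G - 1)) :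
    G.IsUpperTriangular := by
  have hone : VanishesBelowSuperdiag 0 (1 : Matrix (Fin r) (Fin r) R) :=
    vanishesBelowSuperdiag_zero_iff.mpr blockTriangular_one
  simpa using vanishesBelowSuperdiag_zero_iff.mp ((h.mono (Nat.zero_le e)).add hone)

theorem VanishesBelowSuperdiag.det_eq_one (h : VanishesBelowSuperdiag 1 (G - 1)) : G.det = 1 := by
  rw [det_of_isUpperTriangular h.isUpperTriangular_of_sub_one]
  exact Finset.prod_eq_one fun i _ => (vanishesBelowSuperdiag_one_sub_one_iff.mp h).1 i

theorem VanishesBelowSuperdiag.isUnit_det (h : VanishesBelowSuperdiag 1 (G - 1)) :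
    IsUnit G.det := by
  rw [h.det_eq_one]
  exact isUnit_one

theorem VanishesBelowSuperdiag.inv_sub_one (h : VanishesBelowSuperdiag e (G - 1)) (he : 1 ≤ e) :
    VanishesBelowSuperdiag e (G⁻¹ - 1) := by
  have hdet := (h.mono he).isUnit_det
  let := invertibleOfIsUnitDet G hdet
  have hinv : VanishesBelowSuperdiag 0 G⁻¹ := vanishesBelowSuperdiag_zero_iff.mpr
    (blockTriangular_inv_of_blockTriangular h.isUpperTriangular_of_sub_one)
  have : G⁻¹ - 1 = -((G - 1) * G⁻¹) := by
    rw [sub_mul, mul_nonsing_inv G hdet, one_mul, neg_sub]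
  simpa [this] using (h.mul hinv).neg

theorem VanishesBelowSuperdiag.mul_sub_one (hG : VanishesBelowSuperdiag 1 (G - 1))
    (hH : VanishesBelowSuperdiag 1 (H - 1)) : VanishesBelowSuperdiag 1 (G * H - 1) := by
  have : G * H - 1 = (G - 1) * H + (H - 1) := by noncomm_ring
  rw [this]
  exact (hG.mul (vanishesBelowSuperdiag_zero_iff.mpr hH.isUpperTriangular_of_sub_one)).add hH

end Unipotent

section GaugeFiltration

variable {r : ℕ} {K A M : Type*} [CommRing K] [CommRing A] [Algebra K A] [AddCommGroup M]
  [Module A M] [Module K M] (D : Derivation K A M)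

theorem map_derivation_sub_one (G : Matrix (Fin r) (Fin r) A) : (G - 1).map D = G.map D := by
  rw [Matrix.map_sub D (map_sub D), map_derivation_one, sub_zero]

variable {e : ℕ} {G : Matrix (Fin r) (Fin r) A} {ω : Matrix (Fin r) (Fin r) M}

/-- Writing `G = 1 + N` and `G⁻¹ = 1 + P` with `N, P` of order `e ≥ 1`, every term of
`G⁻¹ ω G + G⁻¹ dG` other than `ω` and `dG` contains two factors of positive order. -/
theorem VanishesBelowSuperdiag.gaugeTransform_sub_sub (hG : VanishesBelowSuperdiag e (G - 1))
    (he : 1 ≤ e) (hω : VanishesBelowSuperdiag 1 ω) :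
    VanishesBelowSuperdiag (e + 1) (gaugeTransform D G ω - ω - G.map D) := by
  have hGinv := hG.inv_sub_one he
  have hGup : VanishesBelowSuperdiag 0 G :=
    vanishesBelowSuperdiag_zero_iff.mpr hG.isUpperTriangular_of_sub_one
  have hdG : VanishesBelowSuperdiag e (G.map D) := by
    rw [← map_derivation_sub_one]
    exact hG.map D.map_zero
  have expand : gaugeTransform D G ω - ω - G.map D =
      (G⁻¹ - 1) •ₘ (ω ₘ• G) + ω ₘ• (G - 1) + (G⁻¹ - 1) •ₘ G.map D := by
    simp only [gaugeTransform, sub_leftMul, rightMul_sub, one_leftMul, rightMul_one]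
    abel
  rw [expand]
  exact (((hGinv.leftMul (hω.rightMul hGup)).mono (by omega)).add
    ((hω.rightMul hG).mono (by omega))).add ((hGinv.leftMul hdG).mono (by omega))

variable {D} {V : Submodule K M}

theorem exists_gaugeTransform_mem_below_succ (hV : ∀ x : M, ∃ a, x + D a ∈ V)
    (he : 1 ≤ e) (hω : VanishesBelowSuperdiag 1 ω)
    (hωV : ∀ i j : Fin r, (j : ℕ) < i + e → ω i j ∈ V) :
    ∃ G : Matrix (Fin r) (Fin r) A, VanishesBelowSuperdiag 1 (G - 1) ∧
      VanishesBelowSuperdiag 1 (gaugeTransform D G ω) ∧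
      ∀ i j : Fin r, (j : ℕ) < i + (e + 1) → gaugeTransform D G ω i j ∈ V := by
  choose a ha using hV
  set N : Matrix (Fin r) (Fin r) A := of fun i j => if (j : ℕ) = i + e then a (ω i j) else 0
  have hN : VanishesBelowSuperdiag e N := fun i j hij => if_neg (by omega)
  have hG : VanishesBelowSuperdiag e (1 + N - 1) := by simpa using hN
  have hdG : (1 + N).map D = N.map D := by rw [← map_derivation_sub_one, add_sub_cancel_left]
  have key := hG.gaugeTransform_sub_sub D he hω
  rw [hdG] at key
  refine ⟨1 + N, hG.mono he, ?_, fun i j hij => ?_⟩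
  · simpa only [sub_add_cancel] using
      ((key.mono (by omega)).add ((hN.map D.map_zero).mono he)).add hω
  · have hij' : gaugeTransform D (1 + N) ω i j = ω i j + D (N i j) := by
      simpa [sub_eq_zero, sub_sub] using key i j hij
    rw [hij']
    by_cases hje : (j : ℕ) = i + e
    · simpa [N, hje] using ha (ω i j)
    · simpa [N, hje] using hωV i j (by omega)

theorem exists_gaugeTransform_mem_below (hV : ∀ x : M, ∃ a, x + D a ∈ V)
    (hω : VanishesBelowSuperdiag 1 ω) (e : ℕ) :
    ∃ G : Matrix (Fin r) (Fin r) A, VanishesBelowSuperdiag 1 (G - 1) ∧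
      VanishesBelowSuperdiag 1 (gaugeTransform D G ω) ∧
      ∀ i j : Fin r, (j : ℕ) < i + (e + 1) → gaugeTransform D G ω i j ∈ V := by
  induction e with
  | zero =>
    refine ⟨1, by rw [sub_self]; exact fun _ _ _ => rfl, ?_⟩
    rw [gaugeTransform_one]
    exact ⟨hω, fun i j hij => by simp [hω i j hij]⟩
  | succ e ih =>
    obtain ⟨G, hG, hGω, hGωV⟩ := ih
    obtain ⟨H, hH, hHω, hHωV⟩ :=
      exists_gaugeTransform_mem_below_succ hV (Nat.succ_pos e) hGω hGωV
    refine ⟨G * H, hG.mul_sub_one hH, ?_⟩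
    rw [gaugeTransform_mul D hG.isUnit_det]
    exact ⟨hHω, hHωV⟩

theorem exists_unipotent_gaugeTransform_mem (hV : ∀ x : M, ∃ a, x + D a ∈ V)
    (hω : VanishesBelowSuperdiag 1 ω) :
    ∃ G : Matrix (Fin r) (Fin r) A, VanishesBelowSuperdiag 1 (G - 1) ∧
      VanishesBelowSuperdiag 1 (gaugeTransform D G ω) ∧
      ∀ i j, gaugeTransform D G ω i j ∈ V := by
  obtain ⟨G, hG, hGω, hGωV⟩ := exists_gaugeTransform_mem_below hV hω r
  exact ⟨G, hG, hGω, fun i j => hGωV i j (by omega)⟩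

end GaugeFiltration

end Matrix

theorem stmt8_general (L A : Type*) [Field L] [CommRing A] [Algebra L A]
    (m : ℕ) (α : Fin m → KaehlerDifferential L A)
    (hα : ∀ ω : KaehlerDifferential L A, ∃ c : Fin m → L, ∃ a : A,
      ω = (∑ i, algebraMap L A (c i) • α i) + KaehlerDifferential.D L A a)
    (r : ℕ)
    (ω : Matrix (Fin r) (Fin r) (KaehlerDifferential L A))
    (hω : ∀ i j : Fin r, j ≤ i → ω i j = 0) :
    ∃ G Ginv : Matrix (Fin r) (Fin r) A,
      G * Ginv = 1 ∧ Ginv * G = 1 ∧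
      (∀ i : Fin r, G i i = 1) ∧ (∀ i j : Fin r, j < i → G i j = 0) ∧
      (∀ i j : Fin r, j ≤ i →
        (∑ k, ∑ l, (Ginv i k * G l j) • ω k l) +
          (∑ k, Ginv i k • KaehlerDifferential.D L A (G k j)) = 0) ∧
      (∀ i j : Fin r, ∃ c : Fin m → L,
        (∑ k, ∑ l, (Ginv i k * G l j) • ω k l) +
          (∑ k, Ginv i k • KaehlerDifferential.D L A (G k j)) =
        ∑ t, algebraMap L A (c t) • α t) := by
  set V := Submodule.span L (Set.range α)
  have hV : ∀ x, ∃ a, x + KaehlerDifferential.D L A a ∈ V := by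
    intro x
    obtain ⟨c, a, rfl⟩ := hα x
    refine ⟨-a, ?_⟩
    simpa [algebraMap_smul] using
      Submodule.sum_mem V fun i _ => V.smul_mem (c i) (Submodule.subset_span ⟨i, rfl⟩)
  obtain ⟨G, hG, hGω, hGωV⟩ :=
    Matrix.exists_unipotent_gaugeTransform_mem hV fun i j hij =>
      hω i j (Fin.le_def.mpr (by omega))
  have hdet := hG.isUnit_det
  obtain ⟨hdiag, hlow⟩ := Matrix.vanishesBelowSuperdiag_one_sub_one_iff.mp hG
  refine ⟨G, G⁻¹, Matrix.mul_nonsing_inv G hdet, Matrix.nonsing_inv_mul G hdet, hdiag, hlow,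
    fun i j hij => ?_, fun i j => ?_⟩
  · rw [← Matrix.gaugeTransform_apply]
    exact hGω i j (by have := Fin.le_def.mp hij; omega)
  · obtain ⟨c, hc⟩ := (Submodule.mem_span_range_iff_exists_fun L).mp (hGωV i j)
    exact ⟨c, by simp only [← Matrix.gaugeTransform_apply, ← hc, algebraMap_smul]⟩

/-- Gauge transformation lemma (Lemma 2 of the paper). Let `L` be a field of
characteristic zero, `A` a commutative `L`-algebra, `Ω = Ω_{A/L}` with universal
derivation `d`. Suppose every `ω ∈ Ω` is an `L`-linear combination of `α_1, …, α_m`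
plus an exact form. Then for every `r ≥ 1` and every strictly upper-triangular `r×r`
matrix `ω` over `Ω`, there is an upper-triangular unipotent matrix `G ∈ GL_r(A)` such
that `G⁻¹ωG + G⁻¹dG` is strictly upper-triangular with entries in the `L`-span of the
`α_i`. -/
theorem stmt8 (L A : Type*) [Field L] [CharZero L] [CommRing A] [Algebra L A]
    (m : ℕ) (α : Fin m → KaehlerDifferential L A)
    (hα : ∀ ω : KaehlerDifferential L A, ∃ c : Fin m → L, ∃ a : A,
      ω = (∑ i, algebraMap L A (c i) • α i) + KaehlerDifferential.D L A a)
    (r : ℕ) (hr : 1 ≤ r)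
    (ω : Matrix (Fin r) (Fin r) (KaehlerDifferential L A))
    (hω : ∀ i j : Fin r, j ≤ i → ω i j = 0) :
    ∃ G Ginv : Matrix (Fin r) (Fin r) A,
      G * Ginv = 1 ∧ Ginv * G = 1 ∧
      (∀ i : Fin r, G i i = 1) ∧ (∀ i j : Fin r, j < i → G i j = 0) ∧
      (∀ i j : Fin r, j ≤ i →
        (∑ k, ∑ l, (Ginv i k * G l j) • ω k l) +
          (∑ k, Ginv i k • KaehlerDifferential.D L A (G k j)) = 0) ∧
      (∀ i j : Fin r, ∃ c : Fin m → L,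
        (∑ k, ∑ l, (Ginv i k * G l j) • ω k l) +
          (∑ k, Ginv i k • KaehlerDifferential.D L A (G k j)) =
        ∑ t, algebraMap L A (c t) • α t) :=
  stmt8_general L A m α hα r ω hω
end

section
/- Let A be a commutative ring, M an A-module, and W the free monoid on m letters (words in letters A_1, …, A_m, with identity the empty word e). Let (u_w)_{w ∈ W} be a family of elements of M that is linearly independent over A (every finitely supported A-linear relation Σ_w a_w u_w = 0 forces all a_w = 0). Let (γ_w)_{w ∈ W} be a family of elements of A with γ_e = 1. Define j_w = Σ_{(w′, w″) : w′w″ = w} γ_{w″}·u_{w′}, the sum over all factorizations of w as a concatenation w = w′w″. Then the family (j_w)_{w ∈ W} is linearly independent over A. -/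
/-!
Since `γ 1 = 1`, the split at the end of `w` contributes `u w`, and every other split contributes a
multiple of `u w'` for a strictly shorter prefix `w'`: the change of family `u ↦ j` is
unitriangular with respect to word length. In a vanishing combination of the `j`'s, a word of
maximal length with nonzero coefficient would make `u` of that word a combination of the others.
-/

open Submodule

theorem LinearIndependent.of_sub_mem_span_lt {ι R M κ : Type*} [Ring R] [AddCommGroup M]
    [Module R M] [LinearOrder κ] {u v : ι → M} (hu : LinearIndependent R u) (rk : ι → κ)
    (hv : ∀ i, v i - u i ∈ span R (u '' {j | rk j < rk i})) :
    LinearIndependent R v := by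
  classical
  rw [linearIndependent_iff']
  intro s g hsum
  by_contra! hne
  obtain ⟨i, hi, hmax⟩ := (s.filter (g · ≠ 0)).exists_max_image rk
    (by simpa [Finset.filter_nonempty_iff] using hne)
  rw [Finset.mem_filter] at hi
  set S := span R (u '' (Set.univ \ {i}))
  have hlower : ∀ j, rk j ≤ rk i → v j - u j ∈ S := fun j hj =>
    span_mono (Set.image_mono fun k (hk : rk k < rk j) =>
      show k ∈ Set.univ \ {i} from ⟨trivial, fun hki : k = i => (hki ▸ hk).not_ge hj⟩) (hv j)
  have hothers : ∀ j ∈ s.erase i, g j • v j ∈ S := by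
    intro j hj
    obtain ⟨hji, hjs⟩ := Finset.mem_erase.mp hj
    by_cases hgj : g j = 0
    · simp [hgj]
    have hu_j : u j ∈ S := subset_span ⟨j, ⟨trivial, hji⟩, rfl⟩
    have hv_j : v j ∈ S := add_sub_cancel (u j) (v j) ▸
      add_mem hu_j (hlower j (hmax j (Finset.mem_filter.mpr ⟨hjs, hgj⟩)))
    exact smul_mem S (g j) hv_j
  have hdecomp : g i • u i = -(g i • (v i - u i) + ∑ j ∈ s.erase i, g j • v j) := by
    rw [Finset.sum_erase_eq_sub hi.1, hsum, smul_sub]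
    abel
  refine hi.2 (hu.eq_zero_of_smul_mem_span i (g i) ?_)
  rw [hdecomp]
  exact neg_mem (add_mem (smul_mem S _ (hlower i le_rfl)) (sum_mem hothers))

/-- Convolution with a family `γ` of scalars with `γ_e = 1` preserves linear
independence of a family indexed by the free monoid on `m` letters:
if `(u_w)` is `A`-linearly independent and `j_w = Σ_{w′w″ = w} γ_{w″}·u_{w′}` (the sum
over all factorizations of the word `w`, i.e. over all split points of the word),
then `(j_w)` is `A`-linearly independent. -/
theorem stmt11 (A : Type*) [CommRing A] (M : Type*) [AddCommGroup M] [Module A M]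
    (m : ℕ) (u : FreeMonoid (Fin m) → M) (hu : LinearIndependent A u)
    (γ : FreeMonoid (Fin m) → A) (hγ : γ 1 = 1) :
    LinearIndependent A (fun w : FreeMonoid (Fin m) =>
      ∑ i ∈ Finset.range ((FreeMonoid.toList w).length + 1),
        γ (FreeMonoid.ofList ((FreeMonoid.toList w).drop i)) •
          u (FreeMonoid.ofList ((FreeMonoid.toList w).take i))) := by
  refine hu.of_sub_mem_span_lt (fun w => (FreeMonoid.toList w).length) fun w => ?_
  rw [Finset.sum_range_succ, List.drop_length, List.take_length, FreeMonoid.ofList_nil, hγ,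
    one_smul, FreeMonoid.ofList_toList, add_sub_cancel_right]
  refine sum_mem fun i hi => smul_mem _ _ (subset_span ⟨_, ?_, rfl⟩)
  simp only [Finset.mem_range] at hi
  simp only [Set.mem_ofPred_eq, FreeMonoid.toList_ofList, List.length_take]
  omega
end
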